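/- Let P ⊆ ℤⁿ be a finitely generated submonoid generating ℤⁿ, σ∨ the cone it generates, σ the dual cone, and ρ an extremal ray of σ. If the face ρ̂ = ρ⊥ ∩ σ∨ of σ∨ is almost saturated (i.e., contains a point w ∈ P with (w + σ∨) ∩ ℤⁿ ⊆ P), then there exists a Demazure root e for ρ with (P + e) ∩ P_sat ⊆ P; in particular the derivation δ_e of K[P] given by δ_e(χ^m) = ⟨m, n_ρ⟩χ^{m+e} is a well-defined nonzero locally nilpotent derivation. -/

import Mathlib

/-!
Extremality of `ρ` makes `ρ̂` a facet of `σ∨`: by Farkas' lemma there is an integral `V` with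
`⟨V, n_ρ⟩ = 0` and `⟨V, n_ξ⟩ > 0` for every other extremal ray `ξ`. Since `n_ρ` is primitive there
is a `g` with `⟨g, n_ρ⟩ = -1`, and `g + N V` is a Demazure root for `N` large; so is
`e = w + g + N V` for the saturation point `w ∈ ρ̂`. If `m ∈ P` and `m + e ∈ σ∨`, then
`m + e - w = m + (g + N V)` pairs nonnegatively with every `n_ξ`, `ξ ≠ ρ`, and with `n_ρ` like
`m + e` does, so `m + e ∈ w + σ∨ ⊆ P`. In particular `m + e ∈ P` as soon as `⟨m, n_ρ⟩ > 0`, which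
is exactly what the Leibniz rule for `δ_e` needs. As `δ_e` lowers `⟨·, n_ρ⟩ ≥ 0` by one it is
locally nilpotent, and it is nonzero because `P` generates `ℤⁿ`.
-/

/-- The standard pairing between the lattices `M = ℤⁿ` and `N = ℤⁿ`. -/
def pairZ {n : ℕ} (x y : Fin n → ℤ) : ℤ := ∑ i, x i * y i

/-- The rational polyhedral cone generated by finitely many rational vectors. -/
def coneOf {n k : ℕ} (v : Fin k → (Fin n → ℚ)) : Set (Fin n → ℚ) :=
  {x | ∃ q : Fin k → ℚ, (∀ i, 0 ≤ q i) ∧ x = ∑ i, q i • v i}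

/-- Rational cast of an integer vector. -/
def qcast {n : ℕ} (v : Fin n → ℤ) : Fin n → ℚ := fun i => ((v i : ℤ) : ℚ)

lemma pairZ_eq_dotProduct {n : ℕ} (x y : Fin n → ℤ) : pairZ x y = x ⬝ᵥ y := rfl

theorem farkas_alternative {𝕜 ι m : Type*} [Field 𝕜] [LinearOrder 𝕜] [IsStrictOrderedRing 𝕜]
    [Fintype m] (s : Finset ι) (a : ι → m → 𝕜) (b : m → 𝕜) :
    (∃ c : ι → 𝕜, (∀ i, 0 ≤ c i) ∧ ∑ i ∈ s, c i • a i = b) ∨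
      ∃ v : m → 𝕜, (∀ i ∈ s, 0 ≤ v ⬝ᵥ a i) ∧ v ⬝ᵥ b < 0 := by
  classical
  induction s using Finset.induction_on generalizing a b with
  | empty =>
    by_cases hb : b = 0
    · exact .inl ⟨0, fun _ => le_rfl, by simp [hb]⟩
    · refine .inr ⟨-b, by simp, ?_⟩
      rw [neg_dotProduct, neg_neg_iff_pos]
      exact lt_of_le_of_ne (Finset.sum_nonneg fun i _ => mul_self_nonneg (b i))
        (Ne.symm (dotProduct_self_eq_zero.not.mpr hb))
  | insert j s hj ih =>
    have sum_update (c : ι → 𝕜) (t : 𝕜) :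
        ∑ i ∈ insert j s, Function.update c j t i • a i = t • a j + ∑ i ∈ s, c i • a i := by
      rw [Finset.sum_insert hj, Function.update_self]
      congr 1
      exact Finset.sum_congr rfl fun i hi => by
        rw [Function.update_of_ne (ne_of_mem_of_not_mem hi hj)]
    have update_nonneg (c : ι → 𝕜) (hc : ∀ i, 0 ≤ c i) (t : 𝕜) (ht : 0 ≤ t) :
        ∀ i, 0 ≤ Function.update c j t i := fun i => by
      rcases eq_or_ne i j with rfl | hi
      · simpa
      · simpa [hi] using hc i
    obtain ⟨c, hc, rfl⟩ | ⟨v, hv, hvb⟩ := ih a b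
    · exact .inl ⟨Function.update c j 0, update_nonneg c hc 0 le_rfl, by simp [sum_update]⟩
    obtain hvj | hvj := le_or_gt 0 (v ⬝ᵥ a j)
    · exact .inr ⟨v, Finset.forall_mem_insert _ _ _ |>.mpr ⟨hvj, hv⟩, hvb⟩
    set d := v ⬝ᵥ a j
    -- `π` projects along `a j` onto the hyperplane `v = 0`
    let π : (m → 𝕜) →ₗ[𝕜] (m → 𝕜) :=
      LinearMap.id - (dotProductBilin 𝕜 𝕜 (d⁻¹ • v)).smulRight (a j)
    have π_apply (x : m → 𝕜) : π x = x - (v ⬝ᵥ x / d) • a j := by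
      simp [π, div_eq_inv_mul]
    have dotProduct_π (u x : m → 𝕜) : u ⬝ᵥ π x = (u - (u ⬝ᵥ a j / d) • v) ⬝ᵥ x := by
      simp only [π_apply, dotProduct_sub, sub_dotProduct, dotProduct_smul, smul_dotProduct,
        smul_eq_mul, dotProduct_comm u x, dotProduct_comm v x]
      ring
    obtain ⟨c, hc, hcb⟩ | ⟨u, hu, hub⟩ := ih (fun i => π (a i)) (π b)
    · set y := ∑ i ∈ s, c i • a i
      have hπ : π (b - y) = 0 := by simp [y, map_sum, ← hcb]
      rw [π_apply, sub_eq_zero] at hπ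
      have hvy : 0 ≤ v ⬝ᵥ y := by
        simp only [y, dotProduct_sum, dotProduct_smul, smul_eq_mul]
        exact Finset.sum_nonneg fun i hi => mul_nonneg (hc i) (hv i hi)
      have ht : 0 ≤ v ⬝ᵥ (b - y) / d :=
        div_nonneg_of_nonpos (by rw [dotProduct_sub]; linarith) hvj.le
      refine .inl ⟨Function.update c j _, update_nonneg c hc _ ht, ?_⟩
      rw [sum_update, ← hπ, sub_add_cancel]
    · refine .inr ⟨u - (u ⬝ᵥ a j / d) • v, Finset.forall_mem_insert _ _ _ |>.mpr ⟨?_, ?_⟩, ?_⟩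
      · rw [← dotProduct_π, π_apply, div_self hvj.ne, one_smul, sub_self, dotProduct_zero]
      · exact fun i hi => dotProduct_π u (a i) ▸ hu i hi
      · exact dotProduct_π u b ▸ hub

lemma exists_dotProduct_pos_of_ne_smul {n k : ℕ} (u : Fin k → Fin n → ℚ) (i₀ j : Fin k)
    (hj : ∀ q : ℚ, u j ≠ q • u i₀)
    (hextremal : ∀ x y : Fin n → ℚ, x ∈ coneOf u → y ∈ coneOf u →
      (∃ q : ℚ, 0 ≤ q ∧ x + y = q • u i₀) → ∃ q : ℚ, 0 ≤ q ∧ x = q • u i₀) :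
    ∃ v : Fin n → ℚ, v ⬝ᵥ u i₀ = 0 ∧ (∀ i, 0 ≤ v ⬝ᵥ u i) ∧ 0 < v ⬝ᵥ u j := by
  -- adjoining `-u i₀` to the generators forces `v ⬝ᵥ u i₀ = 0` in the dual alternative
  obtain ⟨c, hc, hcu⟩ | ⟨v, hv, hvu⟩ :=
    farkas_alternative Finset.univ (Fin.cons (-u i₀) u : Fin (k + 1) → Fin n → ℚ) (-u j)
  · -- `u j + ∑ cᵢ uᵢ` lies on the ray of `u i₀`, so extremality puts `u j` on it too
    rw [Fin.sum_univ_succ, Fin.cons_zero] at hcu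
    simp only [Fin.cons_succ] at hcu
    obtain ⟨q, -, hq⟩ := hextremal (u j) (∑ i, c i.succ • u i)
      ⟨Pi.single j 1, Pi.single_nonneg.2 zero_le_one, by simp⟩ ⟨_, fun i => hc i.succ, rfl⟩
      ⟨c 0, hc 0, by linear_combination (norm := module) hcu⟩
    exact absurd hq (hj q)
  · have h₀ := hv 0 (Finset.mem_univ _)
    have h₁ := fun i : Fin k => hv i.succ (Finset.mem_univ _)
    simp only [Fin.cons_zero, Fin.cons_succ, dotProduct_neg] at h₀ h₁ hvu
    exact ⟨v, le_antisymm (by linarith) (h₁ i₀), h₁, by linarith⟩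

lemma exists_facet_functional {n k : ℕ} (u : Fin k → Fin n → ℚ) (i₀ : Fin k)
    (hdistinct : ∀ j, j ≠ i₀ → ∀ q : ℚ, u j ≠ q • u i₀)
    (hextremal : ∀ x y : Fin n → ℚ, x ∈ coneOf u → y ∈ coneOf u →
      (∃ q : ℚ, 0 ≤ q ∧ x + y = q • u i₀) → ∃ q : ℚ, 0 ≤ q ∧ x = q • u i₀) :
    ∃ v : Fin n → ℚ, v ⬝ᵥ u i₀ = 0 ∧ ∀ j, j ≠ i₀ → 0 < v ⬝ᵥ u j := by
  have : ∀ j, ∃ v : Fin n → ℚ, v ⬝ᵥ u i₀ = 0 ∧ (∀ i, 0 ≤ v ⬝ᵥ u i) ∧ (j ≠ i₀ → 0 < v ⬝ᵥ u j) := by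
    intro j
    by_cases hj : j = i₀
    · exact ⟨0, by simp, by simp, fun h => absurd hj h⟩
    · obtain ⟨v, hv₀, hv, hvj⟩ :=
        exists_dotProduct_pos_of_ne_smul u i₀ j (hdistinct j hj) hextremal
      exact ⟨v, hv₀, hv, fun _ => hvj⟩
  choose v hv₀ hv hvpos using this
  refine ⟨∑ j, v j, by simp [sum_dotProduct, hv₀], fun j hj => ?_⟩
  rw [sum_dotProduct]
  exact (hvpos j hj).trans_le (Finset.single_le_sum (fun i _ => hv i j) (Finset.mem_univ j))

lemma exists_pos_int_mul_eq_intCast {ι : Type*} [Fintype ι] (v : ι → ℚ) :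
    ∃ D : ℤ, 0 < D ∧ ∃ V : ι → ℤ, ∀ i, (V i : ℚ) = D * v i := by
  obtain ⟨⟨b, hb⟩, hbv⟩ := IsLocalization.exist_integer_multiples (nonZeroDivisors ℤ) Finset.univ v
  choose z hz using fun i => hbv i (Finset.mem_univ i)
  refine ⟨b * b, mul_self_pos.2 (nonZeroDivisors.ne_zero hb), fun i => b * z i, fun i => ?_⟩
  simp only [algebraMap_int_eq, eq_intCast, zsmul_eq_mul] at hz
  push_cast
  rw [hz, mul_assoc]

lemma exists_int_facet_functional {n k : ℕ} (nρ : Fin k → Fin n → ℤ) (i₀ : Fin k)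
    (hdistinct : ∀ j, j ≠ i₀ → ∀ q : ℚ, qcast (nρ j) ≠ q • qcast (nρ i₀))
    (hextremal : ∀ x y : Fin n → ℚ, x ∈ coneOf (fun i => qcast (nρ i)) →
      y ∈ coneOf (fun i => qcast (nρ i)) →
      (∃ q : ℚ, 0 ≤ q ∧ x + y = q • qcast (nρ i₀)) →
      ∃ q : ℚ, 0 ≤ q ∧ x = q • qcast (nρ i₀)) :
    ∃ V : Fin n → ℤ, V ⬝ᵥ nρ i₀ = 0 ∧ ∀ j, j ≠ i₀ → 0 < V ⬝ᵥ nρ j := by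
  obtain ⟨v, hv₀, hv⟩ := exists_facet_functional _ i₀ hdistinct hextremal
  obtain ⟨D, hD, V, hV⟩ := exists_pos_int_mul_eq_intCast v
  have hcast (j : Fin k) : ((V ⬝ᵥ nρ j : ℤ) : ℚ) = D * (v ⬝ᵥ qcast (nρ j)) := by
    simp [qcast, dotProduct, Finset.mul_sum, hV, mul_assoc]
  refine ⟨V, ?_, fun j hj => ?_⟩
  · have h := hcast i₀
    rw [hv₀, mul_zero] at h
    exact_mod_cast h
  · have : (0 : ℚ) < D * (v ⬝ᵥ qcast (nρ j)) := mul_pos (by exact_mod_cast hD) (hv j hj)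
    exact_mod_cast (hcast j).symm ▸ this

lemma exists_dotProduct_eq_neg_one {ι : Type*} [Fintype ι] (x : ι → ℤ)
    (hx : Finset.univ.gcd x = 1) : ∃ g : ι → ℤ, g ⬝ᵥ x = -1 := by
  obtain ⟨g, hg⟩ := Finset.gcd_eq_sum_mul Finset.univ x
  exact ⟨-g, by rw [neg_dotProduct, dotProduct_comm, dotProduct, ← hg, hx]⟩

section DemazureRoot

variable {ι κ : Type*} [Fintype ι] (nρ : κ → ι → ℤ) (i₀ : κ)

def IsDemazureRoot (e : ι → ℤ) : Prop :=
  e ⬝ᵥ nρ i₀ = -1 ∧ ∀ j, j ≠ i₀ → 0 ≤ e ⬝ᵥ nρ j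

lemma exists_isDemazureRoot [Finite κ] (hprim : Finset.univ.gcd (nρ i₀) = 1)
    (hfacet : ∃ V : ι → ℤ, V ⬝ᵥ nρ i₀ = 0 ∧ ∀ j, j ≠ i₀ → 0 < V ⬝ᵥ nρ j) :
    ∃ e, IsDemazureRoot nρ i₀ e := by
  obtain ⟨g, hg⟩ := exists_dotProduct_eq_neg_one _ hprim
  obtain ⟨V, hV₀, hV⟩ := hfacet
  obtain ⟨N, hN⟩ := (Filter.eventually_all.2 fun j =>
    (Filter.eventually_ge_atTop |g ⬝ᵥ nρ j|).mono fun N hN (hj : j ≠ i₀) =>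
      show 0 ≤ (g + N • V) ⬝ᵥ nρ j by
        have hNV : N * 1 ≤ N * (V ⬝ᵥ nρ j) :=
          mul_le_mul_of_nonneg_left (hV j hj) ((abs_nonneg _).trans hN)
        rw [add_dotProduct, smul_dotProduct, smul_eq_mul]
        linarith [neg_abs_le (g ⬝ᵥ nρ j)]).exists
  exact ⟨g + N • V, by rw [add_dotProduct, smul_dotProduct, hg, hV₀, smul_zero, add_zero], hN⟩

variable {nρ i₀}

lemma IsDemazureRoot.add {e w : ι → ℤ} (he : IsDemazureRoot nρ i₀ e) (hw₀ : w ⬝ᵥ nρ i₀ = 0)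
    (hw : ∀ j, 0 ≤ w ⬝ᵥ nρ j) : IsDemazureRoot nρ i₀ (w + e) :=
  ⟨by rw [add_dotProduct, hw₀, he.1, zero_add], fun j hj => by
    rw [add_dotProduct]; exact add_nonneg (hw j) (he.2 j hj)⟩

lemma IsDemazureRoot.add_mem_of_saturated {e w : ι → ℤ} (he : IsDemazureRoot nρ i₀ e)
    {P : AddSubmonoid (ι → ℤ)} (hP : ∀ m ∈ P, ∀ j, 0 ≤ m ⬝ᵥ nρ j) (hw₀ : w ⬝ᵥ nρ i₀ = 0)
    (hw : ∀ u : ι → ℤ, (∀ j, 0 ≤ (u - w) ⬝ᵥ nρ j) → u ∈ P) (m : ι → ℤ) (hm : m ∈ P)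
    (hme : ∀ j, 0 ≤ (m + (w + e)) ⬝ᵥ nρ j) : m + (w + e) ∈ P := by
  refine hw _ fun j => ?_
  rw [show m + (w + e) - w = m + e by abel, add_dotProduct]
  rcases eq_or_ne j i₀ with rfl | hj
  · simpa [add_dotProduct, hw₀] using hme j
  · exact add_nonneg (hP m hm j) (he.2 j hj)

lemma IsDemazureRoot.add_mem_of_dotProduct_ne_zero {e : ι → ℤ} (he : IsDemazureRoot nρ i₀ e)
    {P : AddSubmonoid (ι → ℤ)} (hP : ∀ m ∈ P, ∀ j, 0 ≤ m ⬝ᵥ nρ j)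
    (hsat : ∀ m ∈ P, (∀ j, 0 ≤ (m + e) ⬝ᵥ nρ j) → m + e ∈ P) (m : ι → ℤ) (hm : m ∈ P)
    (hm₀ : m ⬝ᵥ nρ i₀ ≠ 0) : m + e ∈ P := by
  refine hsat m hm fun j => ?_
  rw [add_dotProduct]
  rcases eq_or_ne j i₀ with rfl | hj
  · have := hP m hm j
    rw [he.1]
    omega
  · exact add_nonneg (hP m hm j) (he.2 j hj)

end DemazureRoot

lemma AddMonoidAlgebra.single_eq_smul_single_one {K G : Type*} [Semiring K] (m : G) (c : K) :
    single m c = c • single m (1 : K) := by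
  rw [smul_single', mul_one]

section Demazure

open AddMonoidAlgebra

variable {K M : Type*} [CommRing K] [AddCommMonoid M] (P : AddSubmonoid M) (deg : M →+ ℤ) (e : M)

-- `δ_e (χ^m) = deg m • χ^{m+e}`, read inside `K[P]`: under `hroot` below, `deg m = 0` whenever
-- `m + e ∉ P`, so the `else` branch loses nothing.
open Classical in
noncomputable def demazureTerm (m : P) : AddMonoidAlgebra K P :=
  if h : (m : M) + e ∈ P then deg m • single ⟨m + e, h⟩ 1 else 0

variable {P deg e}

lemma demazureTerm_of_mem {m : P} (h : (m : M) + e ∈ P) :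
    (demazureTerm P deg e m : AddMonoidAlgebra K P) = deg m • single ⟨m + e, h⟩ 1 :=
  dif_pos h

lemma demazureTerm_of_not_mem {m : P} (h : (m : M) + e ∉ P) :
    (demazureTerm P deg e m : AddMonoidAlgebra K P) = 0 :=
  dif_neg h

lemma single_mul_demazureTerm (hroot : ∀ m ∈ P, deg m ≠ 0 → m + e ∈ P) (m m' x : P)
    (hx : (x : M) = m + m' + e) :
    single m (1 : K) * demazureTerm P deg e m' = deg m' • single x 1 := by
  by_cases h : (m' : M) + e ∈ P
  · rw [demazureTerm_of_mem h, mul_smul_comm, single_mul_single, one_mul]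
    congr 3
    exact Subtype.ext (by simp [hx, add_assoc])
  · rw [demazureTerm_of_not_mem h, mul_zero, not_not.1 (mt (hroot m' m'.2) h), zero_smul]

lemma demazureTerm_add (hroot : ∀ m ∈ P, deg m ≠ 0 → m + e ∈ P) (m m' : P) :
    (demazureTerm P deg e (m + m') : AddMonoidAlgebra K P) =
      single m 1 * demazureTerm P deg e m' + single m' 1 * demazureTerm P deg e m := by
  by_cases h : (m : M) + m' + e ∈ P
  · rw [demazureTerm_of_mem h, single_mul_demazureTerm hroot m m' ⟨_, h⟩ rfl,
      single_mul_demazureTerm hroot m' m ⟨_, h⟩ (by simp [add_comm (m : M)]),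
      show deg ((m + m' : P) : M) = deg (m : M) + deg (m' : M) from map_add deg _ _, add_smul,
      add_comm]
    rfl
  · have h' : (m' : M) + e ∉ P := fun h' => h (by convert P.add_mem m.2 h' using 1; abel)
    have h'' : (m : M) + e ∉ P := fun h'' => h (by convert P.add_mem m'.2 h'' using 1; abel)
    rw [demazureTerm_of_not_mem h, demazureTerm_of_not_mem h', demazureTerm_of_not_mem h'',
      mul_zero, mul_zero, add_zero]

variable (K P deg e) in
noncomputable def demazureLinearMap : AddMonoidAlgebra K P →ₗ[K] AddMonoidAlgebra K P :=
  (AddMonoidAlgebra.basis P K).constr K (demazureTerm P deg e)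

lemma demazureLinearMap_single (m : P) (c : K) :
    demazureLinearMap K P deg e (single m c) = c • demazureTerm P deg e m := by
  rw [single_eq_smul_single_one, ← basis_apply, map_smul, demazureLinearMap,
    Module.Basis.constr_basis]

variable (hroot : ∀ m ∈ P, deg m ≠ 0 → m + e ∈ P)

variable (K) in
noncomputable def demazureDerivation :
    Derivation K (AddMonoidAlgebra K P) (AddMonoidAlgebra K P) :=
  Derivation.mk' (demazureLinearMap K P deg e) fun x y => by
    induction x using AddMonoidAlgebra.induction_linear with
    | zero => simp
    | add x x' hx hx' => simp only [add_mul, map_add, hx, hx', add_smul, smul_add]; abel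
    | single a r =>
      induction y using AddMonoidAlgebra.induction_linear with
      | zero => simp
      | add y y' hy hy' => simp only [mul_add, map_add, hy, hy', add_smul, smul_add]; abel
      | single a' r' =>
        rw [single_mul_single, demazureLinearMap_single, demazureLinearMap_single,
          demazureLinearMap_single, demazureTerm_add hroot, single_eq_smul_single_one a r,
          single_eq_smul_single_one a' r']
        simp only [smul_eq_mul, smul_mul_smul_comm, smul_add, mul_comm r' r]

lemma demazureDerivation_single (m : P) :
    demazureDerivation K hroot (single m 1) = demazureTerm P deg e m := by
  rw [demazureDerivation, Derivation.coe_mk', demazureLinearMap_single, one_smul]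

lemma demazureDerivation_ne_zero [CharZero K] (hne : ∃ m ∈ P, deg m ≠ 0) :
    demazureDerivation K hroot ≠ 0 := by
  obtain ⟨m, hm, hdeg⟩ := hne
  intro h
  have hδ := demazureDerivation_single (K := K) hroot ⟨m, hm⟩
  rw [h, Derivation.zero_apply, demazureTerm_of_mem (hroot m hm hdeg), smul_single, zsmul_one,
    eq_comm, single_eq_zero, Int.cast_eq_zero] at hδ
  exact hdeg hδ

lemma demazureDerivation_pow_single (hdeg : ∀ m ∈ P, 0 ≤ deg m) (he : deg e = -1) (N : ℕ) (m : P)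
    (hm : deg m < N) :
    ((demazureDerivation K hroot).toLinearMap ^ N) (single m 1) = 0 := by
  induction N generalizing m with
  | zero => exact absurd hm (not_lt.2 (hdeg m m.2))
  | succ N ih =>
    rw [pow_succ, Module.End.mul_apply, Derivation.coeFn_coe, demazureDerivation_single]
    by_cases h : (m : M) + e ∈ P
    · rw [demazureTerm_of_mem h, map_zsmul, ih, smul_zero]
      change deg ((m : M) + e) < N
      rw [map_add, he]
      omega
    · rw [demazureTerm_of_not_mem h, map_zero]

lemma exists_pow_demazureDerivation_apply_eq_zero (hdeg : ∀ m ∈ P, 0 ≤ deg m) (he : deg e = -1)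
    (x : AddMonoidAlgebra K P) :
    ∃ N : ℕ, ((demazureDerivation K hroot).toLinearMap ^ N) x = 0 := by
  induction x using AddMonoidAlgebra.induction_linear with
  | zero => exact ⟨0, map_zero _⟩
  | add x y hx hy =>
    obtain ⟨N, hN⟩ := hx
    obtain ⟨N', hN'⟩ := hy
    refine ⟨max N N', ?_⟩
    rw [map_add, Module.End.pow_map_zero_of_le (le_max_left N N') hN,
      Module.End.pow_map_zero_of_le (le_max_right N N') hN', add_zero]
  | single m c =>
    refine ⟨(deg m).toNat + 1, ?_⟩
    rw [single_eq_smul_single_one, map_smul,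
      demazureDerivation_pow_single hroot hdeg he _ m (by omega), smul_zero]

end Demazure

lemma AddSubmonoid.exists_mem_apply_ne_zero_of_closure_eq_top {M G : Type*} [AddCommGroup M]
    [AddGroup G] {P : AddSubmonoid M} (hP : AddSubgroup.closure (P : Set M) = ⊤) {f : M →+ G}
    (hf : f ≠ 0) :
    ∃ m ∈ P, f m ≠ 0 := by
  by_contra! h
  have hker : AddSubgroup.closure (P : Set M) ≤ f.ker := (AddSubgroup.closure_le _).2 h
  exact hf (AddMonoidHom.ext fun x => hker (hP ▸ AddSubgroup.mem_top x))

theorem stmt10_general {K : Type*} [Field K] [CharZero K] {n k : ℕ}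
    (P : AddSubmonoid (Fin n → ℤ))
    (hgen : AddSubgroup.closure (P : Set (Fin n → ℤ)) = ⊤)
    (nρ : Fin k → (Fin n → ℤ))
    (hprim : ∀ i, Finset.univ.gcd (nρ i) = 1)
    (hPsat : ∀ m ∈ P, ∀ j, 0 ≤ pairZ m (nρ j))
    (i₀ : Fin k)
    (hdistinct : ∀ j, j ≠ i₀ → ∀ q : ℚ, qcast (nρ j) ≠ q • qcast (nρ i₀))
    (hextremal : ∀ x y : Fin n → ℚ, x ∈ coneOf (fun i => qcast (nρ i)) →
      y ∈ coneOf (fun i => qcast (nρ i)) →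
      (∃ q : ℚ, 0 ≤ q ∧ x + y = q • qcast (nρ i₀)) →
      ∃ q : ℚ, 0 ≤ q ∧ x = q • qcast (nρ i₀))
    (hface : ∃ w ∈ P, pairZ w (nρ i₀) = 0 ∧
      ∀ u : Fin n → ℤ, (∀ j, 0 ≤ pairZ (u - w) (nρ j)) → u ∈ P) :
    ∃ e : Fin n → ℤ,
      (pairZ e (nρ i₀) = -1 ∧ ∀ j, j ≠ i₀ → 0 ≤ pairZ e (nρ j)) ∧
      (∀ m ∈ P, (∀ j, 0 ≤ pairZ (m + e) (nρ j)) → m + e ∈ P) ∧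
      ∃ δ : Derivation K (AddMonoidAlgebra K P) (AddMonoidAlgebra K P),
        δ ≠ 0 ∧
        (∀ (m : P) (h : (m : Fin n → ℤ) + e ∈ P),
          δ (AddMonoidAlgebra.single m 1) =
            pairZ (m : Fin n → ℤ) (nρ i₀) • (AddMonoidAlgebra.single (⟨(m : Fin n → ℤ) + e, h⟩ : P) 1 :
              AddMonoidAlgebra K P)) ∧
        (∀ m : P, (m : Fin n → ℤ) + e ∉ P → δ (AddMonoidAlgebra.single m 1) = 0) ∧
        (∀ x : AddMonoidAlgebra K P, ∃ N : ℕ,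
          ((δ.toLinearMap : Module.End K (AddMonoidAlgebra K P)) ^ N) x = 0) := by
  simp only [pairZ_eq_dotProduct] at hPsat hface ⊢
  obtain ⟨w, hwP, hw₀, hwsat⟩ := hface
  obtain ⟨f, hf⟩ := exists_isDemazureRoot nρ i₀ (hprim i₀)
    (exists_int_facet_functional nρ i₀ hdistinct hextremal)
  have he : IsDemazureRoot nρ i₀ (w + f) := hf.add hw₀ (hPsat w hwP)
  have hsat := hf.add_mem_of_saturated hPsat hw₀ hwsat
  let deg : (Fin n → ℤ) →+ ℤ := AddMonoidHom.mk' (· ⬝ᵥ nρ i₀) fun a b => add_dotProduct a b _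
  have hroot : ∀ m ∈ P, deg m ≠ 0 → m + (w + f) ∈ P :=
    he.add_mem_of_dotProduct_ne_zero hPsat hsat
  have hdeg : deg ≠ 0 := fun h => by
    have hne : nρ i₀ ≠ 0 := fun h0 =>
      one_ne_zero ((hprim i₀).symm.trans (Finset.gcd_eq_zero_iff.2 fun i _ => by simp [h0]))
    exact hne (dotProduct_self_eq_zero.1 (DFunLike.congr_fun h (nρ i₀)))
  refine ⟨w + f, he, hsat, demazureDerivation K hroot,
    demazureDerivation_ne_zero hroot
      (AddSubmonoid.exists_mem_apply_ne_zero_of_closure_eq_top hgen hdeg),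
    fun m h => (demazureDerivation_single hroot m).trans (demazureTerm_of_mem h),
    fun m h => (demazureDerivation_single hroot m).trans (demazureTerm_of_not_mem h),
    exists_pow_demazureDerivation_apply_eq_zero hroot (fun m hm => hPsat m hm i₀) he.1⟩

/-- Lemma 4.1, (1) ⇒ (2): if the codimension-one face `ρ̂ = ρ⊥ ∩ σ∨` corresponding to the
extremal ray `ρ = ρ_{i₀}` of `σ` is almost saturated (contains a saturation point `w` of
`P`), then there is a Demazure root `e` for `ρ` with `(P + e) ∩ P_sat ⊆ P`; in particular
`δ_e(χ^m) = ⟨m, n_ρ⟩ χ^{m+e}` is a well-defined nonzero locally nilpotent derivation of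
`K[P]`.  Here `P_sat = {m ∈ ℤⁿ | ∀ j, ⟨m, nρ j⟩ ≥ 0}` and the `nρ j` are the primitive
generators of the pairwise distinct extremal rays of the pointed dual cone `σ`. -/
theorem stmt10 {K : Type*} [Field K] [CharZero K] {n k : ℕ}
    (P : AddSubmonoid (Fin n → ℤ)) (hfg : P.FG)
    (hgen : AddSubgroup.closure (P : Set (Fin n → ℤ)) = ⊤)
    (nρ : Fin k → (Fin n → ℤ))
    (hprim : ∀ i, Finset.univ.gcd (nρ i) = 1)
    (hpointed : ∀ x : Fin n → ℚ, x ∈ coneOf (fun i => qcast (nρ i)) →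
      -x ∈ coneOf (fun i => qcast (nρ i)) → x = 0)
    (hPsat : ∀ m ∈ P, ∀ j, 0 ≤ pairZ m (nρ j))
    (hcone : ∀ m : Fin n → ℤ, (∀ j, 0 ≤ pairZ m (nρ j)) → ∃ N : ℕ, 0 < N ∧ (N : ℤ) • m ∈ P)
    (i₀ : Fin k)
    (hdistinct : ∀ j, j ≠ i₀ → ∀ q : ℚ, qcast (nρ j) ≠ q • qcast (nρ i₀))
    (hextremal : ∀ x y : Fin n → ℚ, x ∈ coneOf (fun i => qcast (nρ i)) →
      y ∈ coneOf (fun i => qcast (nρ i)) →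
      (∃ q : ℚ, 0 ≤ q ∧ x + y = q • qcast (nρ i₀)) →
      ∃ q : ℚ, 0 ≤ q ∧ x = q • qcast (nρ i₀))
    (hface : ∃ w ∈ P, pairZ w (nρ i₀) = 0 ∧
      ∀ u : Fin n → ℤ, (∀ j, 0 ≤ pairZ (u - w) (nρ j)) → u ∈ P) :
    ∃ e : Fin n → ℤ,
      (pairZ e (nρ i₀) = -1 ∧ ∀ j, j ≠ i₀ → 0 ≤ pairZ e (nρ j)) ∧
      (∀ m ∈ P, (∀ j, 0 ≤ pairZ (m + e) (nρ j)) → m + e ∈ P) ∧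
      ∃ δ : Derivation K (AddMonoidAlgebra K P) (AddMonoidAlgebra K P),
        δ ≠ 0 ∧
        (∀ (m : P) (h : (m : Fin n → ℤ) + e ∈ P),
          δ (AddMonoidAlgebra.single m 1) =
            pairZ (m : Fin n → ℤ) (nρ i₀) • (AddMonoidAlgebra.single (⟨(m : Fin n → ℤ) + e, h⟩ : P) 1 :
              AddMonoidAlgebra K P)) ∧
        (∀ m : P, (m : Fin n → ℤ) + e ∉ P → δ (AddMonoidAlgebra.single m 1) = 0) ∧
        (∀ x : AddMonoidAlgebra K P, ∃ N : ℕ,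
          ((δ.toLinearMap : Module.End K (AddMonoidAlgebra K P)) ^ N) x = 0) :=
  stmt10_general P hgen nρ hprim hPsat i₀ hdistinct hextremal hface
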